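/- arXiv:2601.01197 — 3 statements merged into one kernel-verified Lean document; each statement's English description precedes it below -/
import Mathlib

section
/- Let n ≥ 1, α > 0, 1 ≤ p < ∞ and δ > 0, and let f be a measurable function on ℂⁿ such that f·k_z ∈ L^p_α for every z ∈ ℂⁿ. Then there is a constant C > 0 (depending only on n, p, α, δ) such that for every z ∈ ℂⁿ, G_{p,2δ}(f)(z)^p ≤ C·∫_{B(z,2δ)} |H_f(k_z)(w)|^p e^{−αp|w|²/2} dv(w), where H_f(k_z) = f·k_z − P(f·k_z). -/
open MeasureTheory Metric ENNReal
open scoped ENNReal NNReal ComplexConjugate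

noncomputable section

/-- `ℂⁿ` with the Euclidean metric and Lebesgue measure. -/
abbrev Cn (n : ℕ) := EuclideanSpace ℂ (Fin n)

instance (n : ℕ) : MeasurableSpace (Cn n) := borel _
instance (n : ℕ) : BorelSpace (Cn n) := ⟨rfl⟩

/-- Lebesgue measure on `ℂⁿ ≅ ℝ^{2n}`, normalized by an orthonormal real basis. -/
instance (n : ℕ) : MeasureSpace (Cn n) := ⟨(stdOrthonormalBasis ℝ (Cn n)).toBasis.addHaar⟩

/-- The Hermitian pairing `⟨w,z⟩ = ∑ᵢ wᵢ · conj zᵢ`. -/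
def herm {n : ℕ} (w z : Cn n) : ℂ := ∑ i, w i * conj (z i)

/-- The normalized reproducing kernel `k_z(w) = e^{α⟨w,z⟩ − α|z|²/2}` of `F²_α`. -/
def fockKernel (n : ℕ) (α : ℝ) (z w : Cn n) : ℂ :=
  Complex.exp ((α : ℂ) * herm w z - ((α / 2 * ‖z‖ ^ 2 : ℝ) : ℂ))

/-- The weighted measure `e^{−αp|z|²/2} dv(z)`, so that `L^p_α = L^p` of this measure. -/
def wMeasure (n : ℕ) (p α : ℝ) : Measure (Cn n) :=
  (volume : Measure (Cn n)).withDensity fun z =>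
    ENNReal.ofReal (Real.exp (-(α * p / 2) * ‖z‖ ^ 2))

/-- The `L^p_α`-norm `(∫ |f|^p e^{−αp|z|²/2} dv)^{1/p}`, valued in `ℝ≥0∞`. -/
def eNormLpα (n : ℕ) (p α : ℝ) (f : Cn n → ℂ) : ℝ≥0∞ :=
  (∫⁻ z, ENNReal.ofReal (‖f z‖ ^ p * Real.exp (-(α * p / 2) * ‖z‖ ^ 2))) ^ (1 / p)

/-- The Bergman projection `P f(z) = ∫ e^{α⟨z,w⟩} f(w) e^{−α|w|²} dv(w)`. -/
def bergmanProj (n : ℕ) (α : ℝ) (f : Cn n → ℂ) (z : Cn n) : ℂ :=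
  ∫ w, Complex.exp ((α : ℂ) * herm z w) * f w * ((Real.exp (-α * ‖w‖ ^ 2) : ℝ) : ℂ)

/-- The Hankel operator `H_f g = f g − P(fg)`, as a function. -/
def hankel (n : ℕ) (α : ℝ) (f g : Cn n → ℂ) : Cn n → ℂ :=
  fun z => f z * g z - bergmanProj n α (fun w => f w * g w) z

/-- The symbol class `𝒮`: `f·k_z ∈ ⋃_{q ≥ 1} L^q_α` for every `z`. -/
def symbolClass (n : ℕ) (α : ℝ) (f : Cn n → ℂ) : Prop :=
  ∀ z : Cn n, ∃ q : ℝ, 1 ≤ q ∧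
    MemLp (fun w => f w * fockKernel n α z w) (ENNReal.ofReal q) (wMeasure n q α)

/-- `G_{p,ρ}(f)(z)`: the distance of `f` to holomorphic functions in the normalized
`L^p`-metric of the ball `B(z,ρ)`. -/
def Gfun (n : ℕ) (p ρ : ℝ) (f : Cn n → ℂ) (z : Cn n) : ℝ :=
  ⨅ h : {h : Cn n → ℂ // DifferentiableOn ℂ h (ball z ρ)},
    (((∫⁻ w in ball z ρ, ENNReal.ofReal (‖f w - h.1 w‖ ^ p)) /
        volume (ball z ρ)).toReal) ^ (1 / p)

/-- Membership in `IDA^{s,p}`. -/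
def memIDA (n : ℕ) (s p : ℝ) (f : Cn n → ℂ) : Prop :=
  LocallyIntegrable (fun z => ‖f z‖ ^ p) (volume : Measure (Cn n)) ∧
    (∫⁻ z, ENNReal.ofReal (Gfun n p 1 f z ^ s)) < ∞

/-- The `IDA^{s,p}`-norm `(∫ G_p(f)^s dv)^{1/s}`. -/
def idaNorm (n : ℕ) (s p : ℝ) (f : Cn n → ℂ) : ℝ :=
  ((∫⁻ z, ENNReal.ofReal (Gfun n p 1 f z ^ s)).toReal) ^ (1 / s)

/-- The exponent `κ = κ(p,r)` of the main theorem. -/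
def kappaPR (p r : ℝ) : ℝ :=
  if p ≤ 2 then 2
  else if r ≤ p / (p - 1) then p / (p - 1)
  else if r ≤ p then r
  else p

/-- `T : X → Y` is `(q,r)`-summing with constant `C`:
`(∑ₖ ‖T xₖ‖^q)^{1/q} ≤ C · sup_{‖x*‖ ≤ 1} (∑ₖ |x*(xₖ)|^r)^{1/r}`
for all finite sequences. -/
def IsSummingWith {X Y : Type*} [NormedAddCommGroup X] [NormedSpace ℂ X]
    [NormedAddCommGroup Y] (q r : ℝ) (T : X → Y) (C : ℝ) : Prop :=
  ∀ (m : ℕ) (x : Fin m → X) (D : ℝ),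
    (∀ φ : X →L[ℂ] ℂ, ‖φ‖ ≤ 1 → (∑ k, ‖φ (x k)‖ ^ r) ^ (1 / r) ≤ D) →
    (∑ k, ‖T (x k)‖ ^ q) ^ (1 / q) ≤ C * D

instance factOneLeOfReal (p : ℝ) [hp : Fact ((1 : ℝ) ≤ p)] :
    Fact ((1 : ℝ≥0∞) ≤ ENNReal.ofReal p) :=
  ⟨by simpa using ENNReal.one_le_ofReal.mpr hp.out⟩

instance factOneLeOneReal : Fact ((1 : ℝ) ≤ (1 : ℝ)) := ⟨le_refl _⟩

/-- The Fock space `F^p_α` as a submodule of `L^p_α`: the a.e. classes having an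
entire representative. -/
def FockSubmodule (n : ℕ) (p α : ℝ) :
    Submodule ℂ (Lp ℂ (ENNReal.ofReal p) (wMeasure n p α)) where
  carrier := {f | ∃ g : Cn n → ℂ, Differentiable ℂ g ∧ (f : Cn n → ℂ) =ᵐ[wMeasure n p α] g}
  add_mem' := by
    rintro f₁ f₂ ⟨g₁, hg₁, he₁⟩ ⟨g₂, hg₂, he₂⟩
    exact ⟨g₁ + g₂, hg₁.add hg₂, (Lp.coeFn_add f₁ f₂).trans (he₁.add he₂)⟩
  zero_mem' := ⟨0, differentiable_const 0, Lp.coeFn_zero ℂ _ _⟩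
  smul_mem' := by
    rintro c f ⟨g, hg, he⟩
    exact ⟨c • g, hg.const_smul c, (Lp.coeFn_smul c f).trans (he.const_smul c)⟩

/-- The Fock space `F^p_α`, as a normed space. -/
abbrev FockSpace (n : ℕ) (p α : ℝ) := ↥(FockSubmodule n p α)

/-- A continuous linear operator `T : F^p_α → L^p_α` extends the Hankel operator `H_f`
(which is densely defined on the span of the normalized reproducing kernels). -/
def ExtendsHankel (n : ℕ) (p α : ℝ) [Fact ((1 : ℝ) ≤ p)] (f : Cn n → ℂ)
    (T : FockSpace n p α →L[ℂ] Lp ℂ (ENNReal.ofReal p) (wMeasure n p α)) : Prop :=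
  ∀ (z : Cn n) (g : FockSpace n p α),
    ((g : Lp ℂ (ENNReal.ofReal p) (wMeasure n p α)) : Cn n → ℂ)
        =ᵐ[wMeasure n p α] fockKernel n α z →
    ((T g : Lp ℂ (ENNReal.ofReal p) (wMeasure n p α)) : Cn n → ℂ)
        =ᵐ[wMeasure n p α] hankel n α f (fockKernel n α z)

/-- The measure defining `L^p_α(dμ)`, namely `e^{−αp|z|²/2} dμ(z)`. -/
def wMeasureμ (n : ℕ) (p α : ℝ) (μ : Measure (Cn n)) : Measure (Cn n) :=
  μ.withDensity fun z => ENNReal.ofReal (Real.exp (-(α * p / 2) * ‖z‖ ^ 2))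

/-- A continuous linear operator `T : F^p_α → L^p_α(dμ)` is the identity embedding:
it sends each element of the Fock space to (the `L^p(dμ)`-class of) its entire
representative. -/
def IsEmbeddingInto (n : ℕ) (p α : ℝ) [Fact ((1 : ℝ) ≤ p)] (μ : Measure (Cn n))
    (T : FockSpace n p α →L[ℂ] Lp ℂ (ENNReal.ofReal p) (wMeasureμ n p α μ)) : Prop :=
  ∀ (g : FockSpace n p α) (G : Cn n → ℂ), Differentiable ℂ G →
    ((g : Lp ℂ (ENNReal.ofReal p) (wMeasure n p α)) : Cn n → ℂ) =ᵐ[wMeasure n p α] G →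
    ((T g : Lp ℂ (ENNReal.ofReal p) (wMeasureμ n p α μ)) : Cn n → ℂ) =ᵐ[wMeasureμ n p α μ] G

/-- `{z_j}` is a `δ`-lattice: the balls `B(z_j, δ)` cover `ℂⁿ` and the balls
`B(z_j, bδ)` are pairwise disjoint for some `b > 0`. -/
def IsLattice (n : ℕ) (δ : ℝ) (zs : ℕ → Cn n) : Prop :=
  (∀ w : Cn n, ∃ j, w ∈ ball (zs j) δ) ∧
    ∃ b : ℝ, 0 < b ∧ Pairwise fun i j => Disjoint (ball (zs i) (b * δ)) (ball (zs j) (b * δ))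

/-- Every point of `ℂⁿ` lies in at most `N` of the balls `B(z_j, ρ)`. -/
def CoverMult (n : ℕ) (ρ : ℝ) (zs : ℕ → Cn n) (N : ℕ) : Prop :=
  ∀ w : Cn n, Set.Finite {j | w ∈ ball (zs j) ρ} ∧ Set.ncard {j | w ∈ ball (zs j) ρ} ≤ N

/-- The averaged function `μ̂_δ(z) = μ(B(z,δ))/|B(z,δ)|`, valued in `ℝ≥0∞`. -/
def avgE (n : ℕ) (μ : Measure (Cn n)) (δ : ℝ) (z : Cn n) : ℝ≥0∞ :=
  μ (ball z δ) / volume (ball z δ)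

/-- The `t`-Berezin transform `μ̃_t(z) = ∫ |k_z(w)|^t e^{−αt|w|²/2} dμ(w)`, valued in `ℝ≥0∞`. -/
def berezinE (n : ℕ) (α t : ℝ) (μ : Measure (Cn n)) (z : Cn n) : ℝ≥0∞ :=
  ∫⁻ w, ENNReal.ofReal (‖fockKernel n α z w‖ ^ t * Real.exp (-(α * t / 2) * ‖w‖ ^ 2)) ∂μ

end

/-! The holomorphic function `h = P(f k_z) / k_z` is a competitor in the infimum defining
`G_{p,2δ}(f)(z)`: on `B(z, 2δ)` one has `f - h = H_f(k_z) / k_z` and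
`|k_z(w)|⁻¹ = e^{α|w-z|²/2 - α|w|²/2} ≤ e^{2αδ²} e^{-α|w|²/2}`. That `P(f k_z)` is entire follows
by differentiating under the integral sign: Hölder's inequality against a Gaussian shows that
`f k_z e^{-α|w|²}` has finite exponential moments of every order. -/

open scoped InnerProductSpace

section Gaussian

variable {V : Type*} [NormedAddCommGroup V] [InnerProductSpace ℝ V] [FiniteDimensional ℝ V]
  [MeasurableSpace V] [BorelSpace V]

theorem integrable_exp_neg_mul_sq_norm {c : ℝ} (hc : 0 < c) :
    Integrable fun v : V => Real.exp (-c * ‖v‖ ^ 2) := by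
  refine (GaussianFourier.integrable_cexp_neg_mul_sq_norm_add (V := V) (b := c)
    (by simpa using hc) 0 0).norm.congr (.of_forall fun v => ?_)
  simp [Complex.norm_exp, ← Complex.ofReal_pow]

theorem memLp_exp_neg_mul_sq_norm {c : ℝ} (hc : 0 < c) (q : ℝ≥0∞) :
    MemLp (fun v : V => Real.exp (-c * ‖v‖ ^ 2)) q := by
  have hmeas : AEStronglyMeasurable (fun v : V => Real.exp (-c * ‖v‖ ^ 2)) := by
    fun_prop
  rcases eq_or_ne q 0 with rfl | hq0
  · exact memLp_zero_iff_aestronglyMeasurable.2 hmeas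
  rcases eq_or_ne q ∞ with rfl | hqtop
  · refine memLp_top_of_bound hmeas 1 (.of_forall fun v => ?_)
    rw [Real.norm_of_nonneg (Real.exp_pos _).le, Real.exp_le_one_iff]
    nlinarith [sq_nonneg ‖v‖]
  rw [← integrable_norm_rpow_iff hmeas hq0 hqtop]
  refine (integrable_exp_neg_mul_sq_norm (mul_pos hc (ENNReal.toReal_pos hq0 hqtop))).congr
    (.of_forall fun v => ?_)
  dsimp only
  rw [Real.norm_of_nonneg (Real.exp_pos _).le, ← Real.exp_mul]
  ring_nf

theorem exp_mul_sub_mul_sq_le (a r : ℝ) {c : ℝ} (hc : 0 < c) :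
    Real.exp (a * r - c * r ^ 2) ≤ Real.exp (a ^ 2 / (2 * c)) * Real.exp (-(c / 2) * r ^ 2) := by
  rw [← Real.exp_add, Real.exp_le_exp]
  have hsq : 0 ≤ (c * r - a) ^ 2 / (2 * c) := by positivity
  have hexpand : (c * r - a) ^ 2 / (2 * c) = c * r ^ 2 / 2 - a * r + a ^ 2 / (2 * c) := by
    field_simp
    ring
  linarith

theorem memLp_exp_mul_norm_sub_mul_sq_norm (R : ℝ) {c : ℝ} (hc : 0 < c) (q : ℝ≥0∞) :
    MemLp (fun v : V => Real.exp (R * ‖v‖ - c * ‖v‖ ^ 2)) q := by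
  refine ((memLp_exp_neg_mul_sq_norm (half_pos hc) q).const_mul
    (Real.exp (R ^ 2 / (2 * c)))).of_le (by fun_prop) (.of_forall fun v => ?_)
  rw [norm_mul, Real.norm_of_nonneg (Real.exp_pos _).le, Real.norm_of_nonneg (Real.exp_pos _).le,
    Real.norm_of_nonneg (Real.exp_pos _).le]
  exact exp_mul_sub_mul_sq_le R ‖v‖ hc

end Gaussian

section ParametricIntegral

variable {E : Type*} [NormedAddCommGroup E] [InnerProductSpace ℂ E]

theorem norm_cexp_mul_inner_le (c : ℂ) (w ζ : E) :
    ‖Complex.exp (c * ⟪w, ζ⟫_ℂ)‖ ≤ Real.exp (‖c‖ * ‖ζ‖ * ‖w‖) := by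
  rw [Complex.norm_exp, Real.exp_le_exp]
  calc (c * ⟪w, ζ⟫_ℂ).re ≤ ‖c * ⟪w, ζ⟫_ℂ‖ := Complex.re_le_norm _
    _ ≤ ‖c‖ * (‖w‖ * ‖ζ‖) := by rw [norm_mul]; gcongr; exact norm_inner_le_norm w ζ
    _ = ‖c‖ * ‖ζ‖ * ‖w‖ := by ring

variable [MeasurableSpace E] [OpensMeasurableSpace E] [SecondCountableTopology E] {μ : Measure E}

theorem differentiable_integral_cexp_mul_inner_mul (c : ℂ) {G : E → ℂ}
    (hG : ∀ R : ℝ, Integrable (fun w => Real.exp (R * ‖w‖) • G w) μ) :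
    Differentiable ℂ fun ζ => ∫ w, Complex.exp (c * ⟪w, ζ⟫_ℂ) * G w ∂μ := by
  intro ζ₀
  have hGm : AEStronglyMeasurable G μ := by simpa using (hG 0).aestronglyMeasurable
  set R := ‖c‖ * (‖ζ₀‖ + 1)
  have hexp_le : ∀ w, ∀ ζ ∈ ball ζ₀ 1, ‖Complex.exp (c * ⟪w, ζ⟫_ℂ)‖ ≤ Real.exp (R * ‖w‖) := by
    intro w ζ hζ
    refine (norm_cexp_mul_inner_le c w ζ).trans (Real.exp_le_exp.2 ?_)
    have : ‖ζ‖ ≤ ‖ζ₀‖ + 1 := by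
      have := norm_le_norm_add_norm_sub' ζ ζ₀
      rw [mem_ball_iff_norm] at hζ
      linarith
    show ‖c‖ * ‖ζ‖ * ‖w‖ ≤ ‖c‖ * (‖ζ₀‖ + 1) * ‖w‖
    gcongr
  have hmeas : ∀ ζ, AEStronglyMeasurable (fun w => Complex.exp (c * ⟪w, ζ⟫_ℂ) * G w) μ :=
    fun ζ => (by fun_prop : Continuous fun w => Complex.exp (c * ⟪w, ζ⟫_ℂ)).aestronglyMeasurable.mul
      hGm
  refine (hasFDerivAt_integral_of_dominated_of_fderiv_le (ball_mem_nhds ζ₀ one_pos)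
    (F' := fun ζ w => G w • Complex.exp (c * ⟪w, ζ⟫_ℂ) • c • innerSL ℂ w)
    (bound := fun w => ‖c‖ * ‖Real.exp ((R + 1) * ‖w‖) • G w‖)
    (.of_forall hmeas) ?_ ?_ ?_ ((hG (R + 1)).norm.const_mul _) ?_).differentiableAt
  · refine (hG R).norm.mono' (hmeas ζ₀) (.of_forall fun w => ?_)
    rw [norm_mul, norm_smul, Real.norm_of_nonneg (Real.exp_pos _).le]
    gcongr
    exact hexp_le w ζ₀ (mem_ball_self one_pos)
  · exact hGm.smul (by fun_prop : Continuous fun w =>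
      Complex.exp (c * ⟪w, ζ₀⟫_ℂ) • c • innerSL ℂ w).aestronglyMeasurable
  · refine .of_forall fun w ζ hζ => ?_
    rw [norm_smul, norm_smul, norm_smul, innerSL_apply_norm, norm_smul,
      Real.norm_of_nonneg (Real.exp_pos _).le, add_mul, Real.exp_add]
    -- the factor `‖w‖` of the derivative costs one more exponential moment
    have hw : ‖w‖ ≤ Real.exp (1 * ‖w‖) := by
      have := Real.add_one_le_exp ‖w‖
      rw [one_mul]; linarith
    have hexp := hexp_le w ζ hζ
    calc ‖G w‖ * (‖Complex.exp (c * ⟪w, ζ⟫_ℂ)‖ * (‖c‖ * ‖w‖))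
        ≤ ‖G w‖ * (Real.exp (R * ‖w‖) * (‖c‖ * Real.exp (1 * ‖w‖))) := by gcongr
      _ = _ := by ring
  · exact .of_forall fun w ζ _ =>
      ((((innerSL ℂ w).hasFDerivAt (x := ζ)).const_mul c).cexp.mul_const (G w))

end ParametricIntegral

section Fock

variable {n : ℕ}

theorem herm_eq_inner (w z : Cn n) : herm w z = ⟪z, w⟫_ℂ := by
  simp only [herm, PiLp.inner_apply, RCLike.inner_apply]

theorem volume_absolutelyContinuous_wMeasure (p α : ℝ) :
    (volume : Measure (Cn n)) ≪ wMeasure n p α :=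
  withDensity_absolutelyContinuous' (by fun_prop)
    (.of_forall fun _ => (ENNReal.ofReal_pos.2 (Real.exp_pos _)).ne')

theorem memLp_exp_smul_of_memLp_wMeasure {p α : ℝ} (hp : 0 < p) {g : Cn n → ℂ}
    (hg : MemLp g (ENNReal.ofReal p) (wMeasure n p α)) :
    MemLp (fun w => Real.exp (-(α / 2) * ‖w‖ ^ 2) • g w) (ENNReal.ofReal p) := by
  have hp0 : ENNReal.ofReal p ≠ 0 := by simpa using hp
  have hgm : AEStronglyMeasurable g volume :=
    hg.1.mono_ac (volume_absolutelyContinuous_wMeasure p α)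
  rw [← integrable_norm_rpow_iff (by fun_prop) hp0 ofReal_ne_top]
  have := (integrable_norm_rpow_iff hg.1 hp0 ofReal_ne_top).2 hg
  rw [wMeasure, integrable_withDensity_iff_integrable_smul' (by fun_prop)
    (.of_forall fun _ => ofReal_lt_top)] at this
  refine this.congr (.of_forall fun w => ?_)
  simp only [ENNReal.toReal_ofReal hp.le, ENNReal.toReal_ofReal (Real.exp_pos _).le, smul_eq_mul,
    norm_smul, Real.norm_of_nonneg (Real.exp_pos _).le,
    Real.mul_rpow (Real.exp_pos _).le (norm_nonneg _), ← Real.exp_mul]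
  ring_nf

theorem integrable_exp_smul_of_memLp_wMeasure {p α : ℝ} (hα : 0 < α) (hp : 1 ≤ p)
    {g : Cn n → ℂ} (hg : MemLp g (ENNReal.ofReal p) (wMeasure n p α)) (R : ℝ) :
    Integrable fun w => Real.exp (R * ‖w‖) • Real.exp (-α * ‖w‖ ^ 2) • g w := by
  have : HolderTriple (ENNReal.ofReal p).conjExponent (ENNReal.ofReal p) 1 :=
    (HolderConjugate.conjExponent (by simpa using hp)).symm
  have hsplit : (fun w => Real.exp (R * ‖w‖) • Real.exp (-α * ‖w‖ ^ 2) • g w) =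
      (fun w : Cn n => Real.exp (R * ‖w‖ - α / 2 * ‖w‖ ^ 2)) •
        fun w => Real.exp (-(α / 2) * ‖w‖ ^ 2) • g w := by
    ext w
    simp only [Pi.smul_apply', smul_smul, ← Real.exp_add]
    ring_nf
  rw [hsplit, ← memLp_one_iff_integrable]
  exact (memLp_exp_smul_of_memLp_wMeasure (by linarith) hg).smul
    (memLp_exp_mul_norm_sub_mul_sq_norm R (half_pos hα) (ENNReal.ofReal p).conjExponent)

theorem differentiable_bergmanProj {p α : ℝ} (hα : 0 < α) (hp : 1 ≤ p) {g : Cn n → ℂ}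
    (hg : MemLp g (ENNReal.ofReal p) (wMeasure n p α)) :
    Differentiable ℂ (bergmanProj n α g) := by
  have : bergmanProj n α g =
      fun ζ => ∫ w, Complex.exp (α * ⟪w, ζ⟫_ℂ) * (Real.exp (-α * ‖w‖ ^ 2) • g w) := by
    ext ζ
    unfold bergmanProj
    congr 1 with w
    rw [herm_eq_inner, Complex.real_smul]
    ring
  rw [this]
  exact differentiable_integral_cexp_mul_inner_mul _
    (integrable_exp_smul_of_memLp_wMeasure hα hp hg)

theorem fockKernel_ne_zero (α : ℝ) (z w : Cn n) : fockKernel n α z w ≠ 0 :=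
  Complex.exp_ne_zero _

theorem differentiable_fockKernel (α : ℝ) (z : Cn n) : Differentiable ℂ (fockKernel n α z) := by
  have : fockKernel n α z = fun w =>
      Complex.exp ((α : ℂ) * innerSL ℂ z w - ((α / 2 * ‖z‖ ^ 2 : ℝ) : ℂ)) := by
    ext w
    rw [fockKernel, herm_eq_inner, innerSL_apply_apply]
  rw [this]
  fun_prop

theorem norm_fockKernel (α : ℝ) (z w : Cn n) :
    ‖fockKernel n α z w‖ = Real.exp (α / 2 * ‖w‖ ^ 2 - α / 2 * ‖w - z‖ ^ 2) := by
  rw [fockKernel, Complex.norm_exp, herm_eq_inner]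
  have h := norm_sub_sq (𝕜 := ℂ) w z
  rw [← inner_conj_symm, RCLike.conj_re, RCLike.re_to_complex] at h
  congr 1
  simp only [Complex.sub_re, Complex.mul_re, Complex.ofReal_re, Complex.ofReal_im, zero_mul,
    sub_zero]
  rw [h]
  ring

theorem norm_div_fockKernel_rpow_le {α p ρ : ℝ} (hα : 0 ≤ α) (hp : 0 ≤ p) {z w : Cn n}
    (hw : w ∈ ball z ρ) (u : ℂ) :
    ‖u / fockKernel n α z w‖ ^ p ≤
      Real.exp (α * p * ρ ^ 2 / 2) * (‖u‖ ^ p * Real.exp (-(α * p / 2) * ‖w‖ ^ 2)) := by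
  rw [norm_div, norm_fockKernel, Real.div_rpow (norm_nonneg _) (Real.exp_pos _).le,
    ← Real.exp_mul, div_eq_mul_inv, ← Real.exp_neg, mul_left_comm, ← Real.exp_add]
  gcongr
  have : ‖w - z‖ ^ 2 ≤ ρ ^ 2 := by
    rw [mem_ball_iff_norm] at hw
    gcongr
  nlinarith [mul_nonneg hα hp]

theorem hankel_fockKernel_div_fockKernel (α : ℝ) (f : Cn n → ℂ) (z w : Cn n) :
    hankel n α f (fockKernel n α z) w / fockKernel n α z w =
      f w - bergmanProj n α (fun w => f w * fockKernel n α z w) w / fockKernel n α z w := by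
  rw [hankel, sub_div, mul_div_cancel_right₀ _ (fockKernel_ne_zero α z w)]

theorem ofReal_Gfun_rpow_le {p ρ : ℝ} (hp : 0 < p) (f : Cn n → ℂ) {z : Cn n} {h : Cn n → ℂ}
    (hh : DifferentiableOn ℂ h (ball z ρ)) :
    ENNReal.ofReal (Gfun n p ρ f z ^ p) ≤
      (∫⁻ w in ball z ρ, ENNReal.ofReal (‖f w - h w‖ ^ p)) / volume (ball z ρ) := by
  set I := (∫⁻ w in ball z ρ, ENNReal.ofReal (‖f w - h w‖ ^ p)) / volume (ball z ρ)
  have hG : Gfun n p ρ f z ≤ I.toReal ^ (1 / p) := by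
    unfold Gfun
    refine ciInf_le ⟨0, ?_⟩ (⟨h, hh⟩ : {h : Cn n → ℂ // DifferentiableOn ℂ h (ball z ρ)})
    rintro _ ⟨_, rfl⟩
    exact Real.rpow_nonneg ENNReal.toReal_nonneg _
  have hG0 : 0 ≤ Gfun n p ρ f z :=
    Real.iInf_nonneg fun _ => Real.rpow_nonneg ENNReal.toReal_nonneg _
  refine (ENNReal.ofReal_le_ofReal ?_).trans ENNReal.ofReal_toReal_le
  calc Gfun n p ρ f z ^ p ≤ (I.toReal ^ (1 / p)) ^ p := by gcongr
    _ = I.toReal := by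
      rw [← Real.rpow_mul ENNReal.toReal_nonneg, one_div_mul_cancel hp.ne', Real.rpow_one]

end Fock

theorem G_le_hankel_kernel_general (n : ℕ) (α p δ : ℝ) (hα : 0 < α) (hp : 1 ≤ p)
    (hδ : 0 < δ) :
    ∃ C : ℝ, 0 < C ∧
      ∀ f : Cn n → ℂ,
        (∀ z : Cn n, MemLp (fun w => f w * fockKernel n α z w) (ENNReal.ofReal p)
          (wMeasure n p α)) →
        ∀ z : Cn n,
          ENNReal.ofReal (Gfun n p (2 * δ) f z ^ p) ≤
            ENNReal.ofReal C *
              ∫⁻ w in ball z (2 * δ),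
                ENNReal.ofReal (‖hankel n α f (fockKernel n α z) w‖ ^ p *
                  Real.exp (-(α * p / 2) * ‖w‖ ^ 2)) := by
  set E := Real.exp (α * p * (2 * δ) ^ 2 / 2)
  set V := volume (ball (0 : Cn n) (2 * δ))
  have hV : 0 < V.toReal := ENNReal.toReal_pos (measure_ball_pos _ _ (by positivity)).ne'
    measure_ball_lt_top.ne
  refine ⟨E / V.toReal, by positivity, fun f hf z => ?_⟩
  set B := bergmanProj n α (fun w => f w * fockKernel n α z w)
  have hh : DifferentiableOn ℂ (fun w => B w / fockKernel n α z w) (ball z (2 * δ)) :=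
    fun w _ => ((differentiable_bergmanProj hα hp (hf z) w).mul
      ((differentiable_fockKernel α z w).inv (fockKernel_ne_zero α z w))).differentiableWithinAt
  have hpt : ∀ w ∈ ball z (2 * δ), ENNReal.ofReal (‖f w - B w / fockKernel n α z w‖ ^ p) ≤
      ENNReal.ofReal E * ENNReal.ofReal (‖hankel n α f (fockKernel n α z) w‖ ^ p *
        Real.exp (-(α * p / 2) * ‖w‖ ^ 2)) := fun w hw => by
    rw [← ENNReal.ofReal_mul (Real.exp_pos _).le, ← hankel_fockKernel_div_fockKernel]
    exact ENNReal.ofReal_le_ofReal (norm_div_fockKernel_rpow_le hα.le (by linarith) hw _)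
  calc ENNReal.ofReal (Gfun n p (2 * δ) f z ^ p)
      ≤ (∫⁻ w in ball z (2 * δ), ENNReal.ofReal (‖f w - B w / fockKernel n α z w‖ ^ p)) / V := by
        rw [show V = volume (ball z (2 * δ)) from (Measure.addHaar_ball_center _ _ _).symm]
        exact ofReal_Gfun_rpow_le (by linarith) f hh
    _ ≤ ENNReal.ofReal E * (∫⁻ w in ball z (2 * δ), ENNReal.ofReal
          (‖hankel n α f (fockKernel n α z) w‖ ^ p * Real.exp (-(α * p / 2) * ‖w‖ ^ 2))) / V := by
        rw [← lintegral_const_mul' _ _ ofReal_ne_top]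
        gcongr 1
        exact setLIntegral_mono' measurableSet_ball hpt
    _ = _ := by
        rw [ENNReal.ofReal_div_of_pos hV, ENNReal.ofReal_toReal measure_ball_lt_top.ne,
          ENNReal.div_eq_inv_mul, ENNReal.div_eq_inv_mul, mul_assoc]

/-- **Pointwise estimate in Theorems 3.2/3.3.** For `1 ≤ p < ∞` and `δ > 0` there is
`C > 0` such that for every symbol `f` with `f·k_z ∈ L^p_α` for all `z`, and every
`z ∈ ℂⁿ`, `G_{p,2δ}(f)(z)^p ≤ C ∫_{B(z,2δ)} |H_f(k_z)(w)|^p e^{−αp|w|²/2} dv(w)`. -/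
theorem G_le_hankel_kernel (n : ℕ) (hn : 1 ≤ n) (α p δ : ℝ) (hα : 0 < α) (hp : 1 ≤ p)
    (hδ : 0 < δ) :
    ∃ C : ℝ, 0 < C ∧
      ∀ f : Cn n → ℂ,
        (∀ z : Cn n, MemLp (fun w => f w * fockKernel n α z w) (ENNReal.ofReal p)
          (wMeasure n p α)) →
        ∀ z : Cn n,
          ENNReal.ofReal (Gfun n p (2 * δ) f z ^ p) ≤
            ENNReal.ofReal C *
              ∫⁻ w in ball z (2 * δ),
                ENNReal.ofReal (‖hankel n α f (fockKernel n α z) w‖ ^ p *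
                  Real.exp (-(α * p / 2) * ‖w‖ ^ 2)) :=
  G_le_hankel_kernel_general n α p δ hα hp hδ
end

section
/- Let n ≥ 1, α > 0, 1 ≤ q < ∞ and δ > 0, and let {z_j}_{j=1}^∞ be a δ-lattice in ℂⁿ such that every point of ℂⁿ lies in at most N of the balls B(z_j, δ). Then there is a constant C > 0 (depending only on n, α, q, δ, N) such that for every entire function h ∈ F^q_α, ∑_{j=1}^∞ |h(z_j)|^q e^{−αq|z_j|²/2} ≤ C·‖h‖_{q,α}^q. -/
open MeasureTheory Metric ENNReal
open scoped ENNReal NNReal ComplexConjugate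

/-!
Holomorphy of `h` is used only through the sub-mean-value inequality
`|G(z)|^q ≤ C ∫_{B(z,δ)} |G|^q` for entire `G` and `q ≥ 1`: on a disc it follows from the mean
value property on circles and Jensen's inequality, integrated in polar coordinates; Fubini
extends it to polydiscs, and a small polydisc around `z` fits inside `B(z,δ)`. Applied to
`G(w) = h(w) e^{α(|z|²/2 - ⟨w,z⟩)}`, for which `|G(w)| = |h(w)| e^{-α|w|²/2} e^{α|w-z|²/2}`, it
bounds each term `|h(z_j)|^q e^{-αq|z_j|²/2}` by a multiple of the weighted integral of `|h|^q`
over `B(z_j,δ)`. Summing over `j`, each point is counted at most `N` times.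
-/

open Real Set
open scoped Interval

theorem Continuous.norm_rpow_const {X F : Type*} [TopologicalSpace X] [NormedAddCommGroup F]
    {g : X → F} (hg : Continuous g) {q : ℝ} (hq : 0 ≤ q) : Continuous fun x => ‖g x‖ ^ q :=
  hg.norm.rpow_const fun _ => Or.inr hq

section Disc

variable {F : Type*} [NormedAddCommGroup F] [NormedSpace ℂ F] {q : ℝ}

theorem norm_circleAverage_le (g : ℂ → F) (c : ℂ) (R : ℝ) :
    ‖circleAverage g c R‖ ≤ circleAverage (fun ζ => ‖g ζ‖) c R := by
  simp only [circleAverage_def, norm_smul, smul_eq_mul, Real.norm_eq_abs,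
    abs_of_pos (inv_pos.2 two_pi_pos)]
  gcongr
  exact intervalIntegral.norm_integral_le_integral_norm two_pi_pos.le

theorem circleAverage_rpow_le {f : ℂ → ℝ} (hf : Continuous f) (hf0 : ∀ ζ, 0 ≤ f ζ) (hq : 1 ≤ q)
    (c : ℂ) (R : ℝ) : circleAverage f c R ^ q ≤ circleAverage (fun ζ => f ζ ^ q) c R := by
  have hfc : Continuous fun θ => f (circleMap c R θ) := hf.comp (continuous_circleMap c R)
  have hvol : volume (Ι 0 (2 * π)) = ENNReal.ofReal (2 * π) := by
    rw [uIoc_of_le two_pi_pos.le, Real.volume_Ioc, sub_zero]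
  simp only [circleAverage_eq_intervalAverage]
  refine (convexOn_rpow hq).map_set_average_le
    (continuousOn_id.rpow_const fun _ _ => Or.inr (zero_le_one.trans hq)) isClosed_Ici
    (by rw [hvol]; exact (ofReal_pos.2 two_pi_pos).ne') (by rw [hvol]; exact ofReal_ne_top)
    (Filter.Eventually.of_forall fun θ => hf0 _) ?_ ?_
  · exact (intervalIntegrable_iff.1 (hfc.intervalIntegrable _ _))
  · exact (intervalIntegrable_iff.1 ((hfc.rpow_const fun _ => Or.inr
      (zero_le_one.trans hq)).intervalIntegrable _ _))

theorem norm_rpow_le_circleAverage [CompleteSpace F] {g : ℂ → F} (hg : Differentiable ℂ g)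
    (hq : 1 ≤ q) (c : ℂ) (R : ℝ) : ‖g c‖ ^ q ≤ circleAverage (fun ζ => ‖g ζ‖ ^ q) c R := by
  have hq0 : 0 ≤ q := zero_le_one.trans hq
  calc ‖g c‖ ^ q = ‖circleAverage g c R‖ ^ q := by rw [hg.diffContOnCl.circleAverage]
    _ ≤ circleAverage (fun ζ => ‖g ζ‖) c R ^ q :=
      rpow_le_rpow (norm_nonneg _) (norm_circleAverage_le g c R) hq0
    _ ≤ _ := circleAverage_rpow_le hg.continuous.norm (fun _ => norm_nonneg _) hq c R

theorem setLIntegral_Ioo_circleMap_eq {f : ℂ → ℝ} (hf : Continuous f) (hf0 : ∀ ζ, 0 ≤ f ζ)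
    (c : ℂ) (R : ℝ) :
    ∫⁻ θ in Ioo (-π) π, ENNReal.ofReal (f (circleMap c R θ)) =
      ENNReal.ofReal (2 * π * circleAverage f c R) := by
  have hfc : Continuous fun θ => f (circleMap c R θ) := hf.comp (continuous_circleMap c R)
  rw [circleAverage_eq_integral_add (-π), smul_eq_mul, mul_inv_cancel_left₀ two_pi_pos.ne',
    intervalIntegral.integral_comp_add_right (fun θ => f (circleMap c R θ)),
    show (0 : ℝ) + -π = -π by ring, show 2 * π + -π = π by ring,
    intervalIntegral.integral_of_le (by linarith [pi_pos]), integral_Ioc_eq_integral_Ioo,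
    ofReal_integral_eq_lintegral_ofReal]
  · exact hfc.integrableOn_Icc.mono_set Ioo_subset_Icc_self
  · exact Filter.Eventually.of_forall fun θ => hf0 _

theorem setLIntegral_ball_eq_lintegral_circleMap (F : ℂ → ℝ≥0∞) (hF : Measurable F) (c : ℂ)
    (r : ℝ) :
    ∫⁻ ζ in ball c r, F ζ =
      ∫⁻ t in Ioo 0 r, ENNReal.ofReal t * ∫⁻ θ in Ioo (-π) π, F (circleMap c t θ) := by
  have hpolar : ∀ p : ℝ × ℝ, c + Complex.polarCoord.symm p = circleMap c p.1 p.2 := fun p => by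
    simp [circleMap, Complex.exp_mul_I, Complex.ofReal_cos, Complex.ofReal_sin]
  have hmeas : Measurable fun p : ℝ × ℝ => ENNReal.ofReal p.1 * F (circleMap c p.1 p.2) :=
    measurable_fst.ennreal_ofReal.mul (hF.comp (by unfold circleMap; fun_prop))
  calc ∫⁻ ζ in ball c r, F ζ = ∫⁻ ζ, (ball c r).indicator F (c + ζ) := by
        rw [lintegral_add_left_eq_self, lintegral_indicator measurableSet_ball]
    _ = ∫⁻ p in Complex.polarCoord.target,
          ENNReal.ofReal p.1 • (ball c r).indicator F (c + Complex.polarCoord.symm p) :=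
        (Complex.lintegral_comp_polarCoord_symm _).symm
    _ = ∫⁻ p in Ioo 0 r ×ˢ Ioo (-π) π, ENNReal.ofReal p.1 * F (circleMap c p.1 p.2) := by
        rw [← lintegral_indicator Complex.polarCoord.open_target.measurableSet,
          ← lintegral_indicator (measurableSet_Ioo.prod measurableSet_Ioo)]
        congr 1 with ⟨t, θ⟩
        have hball : circleMap c t θ ∈ ball c r ↔ |t| < r := by
          rw [mem_ball, dist_eq_norm, circleMap_sub_center, norm_circleMap_zero]
        classical
        simp only [indicator_apply, hpolar (t, θ), hball, Complex.polarCoord_target, mem_prod,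
          mem_Ioi, mem_Ioo, smul_eq_mul]
        split_ifs <;> grind [abs_of_pos]
    _ = ∫⁻ t in Ioo 0 r, ∫⁻ θ in Ioo (-π) π, ENNReal.ofReal t * F (circleMap c t θ) := by
        rw [Measure.volume_eq_prod, setLIntegral_prod _ hmeas.aemeasurable]
    _ = _ := by
        congr 1 with t
        exact lintegral_const_mul _ (hF.comp (continuous_circleMap c t).measurable)

theorem ofReal_norm_rpow_mul_volume_ball_le [CompleteSpace F] {g : ℂ → F}
    (hg : Differentiable ℂ g) (hq : 1 ≤ q) (c : ℂ) (r : ℝ) :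
    ENNReal.ofReal (‖g c‖ ^ q) * volume (ball c r) ≤
      ∫⁻ ζ in ball c r, ENNReal.ofReal (‖g ζ‖ ^ q) := by
  have hcont := hg.continuous.norm_rpow_const (zero_le_one.trans hq)
  have hcircle : ∀ t, ∫⁻ _ in Ioo (-π) π, ENNReal.ofReal (‖g c‖ ^ q) ≤
      ∫⁻ θ in Ioo (-π) π, ENNReal.ofReal (‖g (circleMap c t θ)‖ ^ q) := fun t => by
    rw [setLIntegral_const, Real.volume_Ioo, ← ofReal_mul (by positivity),
      setLIntegral_Ioo_circleMap_eq hcont (fun _ => by positivity), sub_neg_eq_add, ← two_mul,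
      mul_comm]
    exact ofReal_le_ofReal (mul_le_mul_of_nonneg_left
      (norm_rpow_le_circleAverage hg hq c t) two_pi_pos.le)
  calc ENNReal.ofReal (‖g c‖ ^ q) * volume (ball c r)
      = ∫⁻ _ in ball c r, ENNReal.ofReal (‖g c‖ ^ q) := (setLIntegral_const _ _).symm
    _ = ∫⁻ t in Ioo 0 r, ENNReal.ofReal t * ∫⁻ _ in Ioo (-π) π, ENNReal.ofReal (‖g c‖ ^ q) :=
      setLIntegral_ball_eq_lintegral_circleMap _ measurable_const c r
    _ ≤ ∫⁻ t in Ioo 0 r, ENNReal.ofReal t *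
          ∫⁻ θ in Ioo (-π) π, ENNReal.ofReal (‖g (circleMap c t θ)‖ ^ q) :=
      lintegral_mono fun t => mul_le_mul_right (hcircle t) _
    _ = ∫⁻ ζ in ball c r, ENNReal.ofReal (‖g ζ‖ ^ q) :=
      (setLIntegral_ball_eq_lintegral_circleMap _ hcont.measurable.ennreal_ofReal c r).symm

end Disc

section Polydisc

variable {F : Type*} [NormedAddCommGroup F] [NormedSpace ℂ F] [CompleteSpace F] {q : ℝ}

theorem ofReal_norm_rpow_mul_volume_pi_ball_le (hq : 1 ≤ q) :
    ∀ {n : ℕ} {G : (Fin n → ℂ) → F}, Differentiable ℂ G → ∀ (c : Fin n → ℂ) (r : Fin n → ℝ),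
      ENNReal.ofReal (‖G c‖ ^ q) * volume (univ.pi fun i => ball (c i) (r i)) ≤
        ∫⁻ x in univ.pi fun i => ball (c i) (r i), ENNReal.ofReal (‖G x‖ ^ q)
  | 0, G, _, c, r => by
    rw [← setLIntegral_const]
    exact (lintegral_congr fun x => by rw [Subsingleton.elim x c]).le
  | n + 1, G, hG, c, r => by
    set e := MeasurableEquiv.piFinSuccAbove (fun _ : Fin (n + 1) => ℂ) 0
    have he : MeasurePreserving e volume (volume.prod volume) :=
      volume_preserving_piFinSuccAbove _ 0
    set s₀ := ball (c 0) (r 0)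
    set S := univ.pi fun i : Fin n => ball (c i.succ) (r i.succ)
    set H : ℂ × (Fin n → ℂ) → F := fun p => G (Fin.consEquivL ℂ (fun _ => ℂ) p)
    have hH : Differentiable ℂ H := hG.comp (Fin.consEquivL ℂ (fun _ => ℂ)).differentiable
    have hGH : ∀ x, G x = H (e x) := fun x =>
      congrArg G <| funext fun i => by simp [e, Fin.consEquivL_apply]
    have hbox : univ.pi (fun i => ball (c i) (r i)) = e ⁻¹' (s₀ ×ˢ S) := by
      ext x; simp [e, s₀, S, Fin.forall_fin_succ, Fin.tail]
    have hmeas : Measurable fun p => ENNReal.ofReal (‖H p‖ ^ q) :=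
      (hH.continuous.norm_rpow_const (zero_le_one.trans hq)).measurable.ennreal_ofReal
    calc ENNReal.ofReal (‖G c‖ ^ q) * volume (univ.pi fun i => ball (c i) (r i))
        = ENNReal.ofReal (‖H (c 0, fun i => c i.succ)‖ ^ q) * volume s₀ * volume S := by
          rw [hGH c, hbox, he.measure_preimage (measurableSet_ball.prod
            (MeasurableSet.univ_pi fun _ => measurableSet_ball)).nullMeasurableSet,
            Measure.prod_prod, mul_assoc]
          rfl
      _ ≤ (∫⁻ ζ in s₀, ENNReal.ofReal (‖H (ζ, fun i => c i.succ)‖ ^ q)) * volume S := by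
          gcongr
          exact ofReal_norm_rpow_mul_volume_ball_le
            (hH.comp (differentiable_id.prodMk (differentiable_const _))) hq (c 0) (r 0)
      _ = ∫⁻ ζ in s₀, ENNReal.ofReal (‖H (ζ, fun i => c i.succ)‖ ^ q) * volume S :=
          (lintegral_mul_const _ (hmeas.comp (measurable_id.prodMk measurable_const))).symm
      _ ≤ ∫⁻ ζ in s₀, ∫⁻ x in S, ENNReal.ofReal (‖H (ζ, x)‖ ^ q) :=
          lintegral_mono fun ζ => ofReal_norm_rpow_mul_volume_pi_ball_le hq
            (hH.comp ((differentiable_const _).prodMk differentiable_id)) _ _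
      _ = ∫⁻ p in s₀ ×ˢ S, ENNReal.ofReal (‖H p‖ ^ q) ∂(volume.prod volume) :=
          (setLIntegral_prod _ hmeas.aemeasurable).symm
      _ = ∫⁻ x in univ.pi fun i => ball (c i) (r i), ENNReal.ofReal (‖G x‖ ^ q) := by
          rw [hbox, ← he.setLIntegral_comp_preimage_emb e.measurableEmbedding]
          simp only [hGH]

variable {E : Type*} [NormedAddCommGroup E] [NormedSpace ℂ E] [MeasurableSpace E] [BorelSpace E]
  (μ : Measure E) [μ.IsAddHaarMeasure]

theorem ofReal_norm_rpow_mul_measure_preimage_ball_le {n : ℕ} (L : E ≃L[ℂ] (Fin n → ℂ))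
    {G : E → F} (hG : Differentiable ℂ G) (hq : 1 ≤ q) (z : E) {ρ : ℝ} (hρ : 0 < ρ) :
    ENNReal.ofReal (‖G z‖ ^ q) * μ (L ⁻¹' ball (L z) ρ) ≤
      ∫⁻ w in L ⁻¹' ball (L z) ρ, ENNReal.ofReal (‖G w‖ ^ q) ∂μ := by
  set ν := μ.map L
  have hL : MeasurePreserving L μ ν := L.continuous.measurable.measurePreserving μ
  -- `ν` is a multiple of Lebesgue measure, and both sides of the inequality scale alike.
  obtain ⟨k, hν⟩ : ∃ k : ℝ≥0, ν = k • volume := ⟨_, Measure.isAddLeftInvariant_eq_smul _ _⟩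
  have hG' : Differentiable ℂ (G ∘ L.symm) := hG.comp L.symm.differentiable
  have hmeas : Measurable fun x => ENNReal.ofReal (‖(G ∘ L.symm) x‖ ^ q) :=
    (hG'.continuous.norm_rpow_const (zero_le_one.trans hq)).measurable.ennreal_ofReal
  calc ENNReal.ofReal (‖G z‖ ^ q) * μ (L ⁻¹' ball (L z) ρ)
      = (k : ℝ≥0∞) *
          (ENNReal.ofReal (‖(G ∘ L.symm) (L z)‖ ^ q) * volume (ball (L z) ρ)) := by
        rw [hL.measure_preimage measurableSet_ball.nullMeasurableSet, hν]
        simp only [Function.comp_apply, ContinuousLinearEquiv.symm_apply_apply,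
          Measure.smul_apply, ENNReal.smul_def, smul_eq_mul]
        ring
    _ ≤ (k : ℝ≥0∞) *
          ∫⁻ x in ball (L z) ρ, ENNReal.ofReal (‖(G ∘ L.symm) x‖ ^ q) := by
        rw [ball_pi _ hρ]
        gcongr
        exact ofReal_norm_rpow_mul_volume_pi_ball_le hq hG' _ _
    _ = ∫⁻ x in ball (L z) ρ, ENNReal.ofReal (‖(G ∘ L.symm) x‖ ^ q) ∂ν := by
        conv_rhs => rw [hν]
        rw [Measure.restrict_smul, lintegral_smul_measure, ENNReal.smul_def, smul_eq_mul]
    _ = ∫⁻ w in L ⁻¹' ball (L z) ρ, ENNReal.ofReal (‖G w‖ ^ q) ∂μ := by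
        rw [← hL.setLIntegral_comp_preimage measurableSet_ball hmeas]
        simp

theorem exists_mul_norm_rpow_le_setLIntegral_ball [FiniteDimensional ℂ E] (hq : 1 ≤ q) {δ : ℝ}
    (hδ : 0 < δ) :
    ∃ c : ℝ≥0∞, c ≠ 0 ∧ c ≠ ∞ ∧ ∀ G : E → F, Differentiable ℂ G → ∀ z,
      ENNReal.ofReal (‖G z‖ ^ q) * c ≤ ∫⁻ w in ball z δ, ENNReal.ofReal (‖G w‖ ^ q) ∂μ := by
  set L := (Module.finBasis ℂ E).equivFunL
  obtain ⟨ρ, hρ, hsub⟩ : ∃ ρ > 0, ball 0 ρ ⊆ L.symm ⁻¹' ball 0 δ :=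
    Metric.mem_nhds_iff.1 (L.symm.continuous.continuousAt.preimage_mem_nhds
      (by simpa using ball_mem_nhds (0 : E) hδ))
  have hP : ∀ z, L ⁻¹' ball (L z) ρ ⊆ ball z δ := fun z w hw => by
    simpa [dist_eq_norm] using hsub (show L (w - z) ∈ ball 0 ρ by simpa [dist_eq_norm] using hw)
  have hPz : ∀ z, L ⁻¹' ball (L z) ρ = (· + -z) ⁻¹' (L ⁻¹' ball 0 ρ) := fun z => by
    ext w; simp [dist_eq_norm, sub_eq_add_neg]
  refine ⟨μ (L ⁻¹' ball 0 ρ), ?_, ?_, fun G hG z => ?_⟩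
  · exact (isOpen_ball.preimage L.continuous).measure_ne_zero μ ⟨0, by simpa using hρ⟩
  · exact ne_top_of_le_ne_top measure_ball_lt_top.ne (measure_mono (by simpa using hP 0))
  · rw [← measure_preimage_add_right μ (-z), ← hPz]
    exact (ofReal_norm_rpow_mul_measure_preimage_ball_le μ L hG hq z hρ).trans
      (lintegral_mono_set (hP z))

end Polydisc

section Weighted

variable {E : Type*} [NormedAddCommGroup E] [InnerProductSpace ℂ E] {q : ℝ}

theorem norm_exp_mul_sub_inner (α : ℝ) (z w : E) :
    ‖Complex.exp (α * (((‖z‖ ^ 2 / 2 : ℝ) : ℂ) - inner ℂ z w))‖ =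
      Real.exp (α / 2 * (‖w - z‖ ^ 2 - ‖w‖ ^ 2)) := by
  rw [Complex.norm_exp, norm_sub_sq (𝕜 := ℂ), ← inner_conj_symm z w]
  simp only [Complex.mul_re, Complex.ofReal_re, Complex.ofReal_im, Complex.sub_re,
    Complex.sub_im, Complex.conj_re, zero_mul, sub_zero, RCLike.re_to_complex]
  ring_nf

variable [FiniteDimensional ℂ E] [MeasurableSpace E] [BorelSpace E] (μ : Measure E)
  [μ.IsAddHaarMeasure]

theorem exists_mul_norm_rpow_mul_exp_le_setLIntegral_ball {α : ℝ} (hα : 0 ≤ α) (hq : 1 ≤ q) {δ : ℝ}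
    (hδ : 0 < δ) :
    ∃ c : ℝ≥0∞, c ≠ 0 ∧ c ≠ ∞ ∧ ∀ h : E → ℂ, Differentiable ℂ h → ∀ z,
      ENNReal.ofReal (‖h z‖ ^ q * Real.exp (-(α * q / 2) * ‖z‖ ^ 2)) * c ≤
        ∫⁻ w in ball z δ, ENNReal.ofReal (‖h w‖ ^ q * Real.exp (-(α * q / 2) * ‖w‖ ^ 2)) ∂μ := by
  obtain ⟨c, hc0, hctop, hc⟩ := exists_mul_norm_rpow_le_setLIntegral_ball (F := ℂ) μ hq hδ
  set s := α * q / 2 * δ ^ 2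
  refine ⟨c * ENNReal.ofReal (Real.exp (-s)), mul_ne_zero hc0 (ofReal_pos.2 (exp_pos _)).ne',
    mul_ne_top hctop ofReal_ne_top, fun h hh z => ?_⟩
  set G : E → ℂ := fun w => h w * Complex.exp (α * (((‖z‖ ^ 2 / 2 : ℝ) : ℂ) - inner ℂ z w))
  have hG : Differentiable ℂ G :=
    hh.mul (((differentiable_const _).sub (innerSL ℂ z).differentiable).const_mul _).cexp
  have hGq : ∀ w, ‖G w‖ ^ q =
      ‖h w‖ ^ q * Real.exp (-(α * q / 2) * ‖w‖ ^ 2) * Real.exp (α * q / 2 * ‖w - z‖ ^ 2) := by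
    intro w
    rw [norm_mul, norm_exp_mul_sub_inner, mul_rpow (norm_nonneg _) (exp_pos _).le,
      ← Real.exp_mul, mul_assoc (‖h w‖ ^ q) (Real.exp _), ← Real.exp_add]
    ring_nf
  calc ENNReal.ofReal (‖h z‖ ^ q * Real.exp (-(α * q / 2) * ‖z‖ ^ 2)) *
        (c * ENNReal.ofReal (Real.exp (-s)))
      = ENNReal.ofReal (‖G z‖ ^ q) * c * ENNReal.ofReal (Real.exp (-s)) := by
        rw [hGq z, sub_self, norm_zero]
        simp only [ne_eq, OfNat.ofNat_ne_zero, not_false_eq_true, zero_pow, mul_zero,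
          Real.exp_zero, mul_one]
        ring
    _ ≤ (∫⁻ w in ball z δ, ENNReal.ofReal (‖G w‖ ^ q) ∂μ) * ENNReal.ofReal (Real.exp (-s)) := by
        gcongr
        exact hc G hG z
    _ = ∫⁻ w in ball z δ, ENNReal.ofReal (‖G w‖ ^ q) * ENNReal.ofReal (Real.exp (-s)) ∂μ :=
        (lintegral_mul_const' _ _ ofReal_ne_top).symm
    _ ≤ _ := by
        refine setLIntegral_mono' measurableSet_ball fun w hw => ?_
        have hwz : α * q / 2 * ‖w - z‖ ^ 2 ≤ s := by
          have : ‖w - z‖ ≤ δ := by rw [← dist_eq_norm]; exact (mem_ball.1 hw).le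
          have : 0 ≤ α * q / 2 := by have := zero_le_one.trans hq; positivity
          show _ ≤ α * q / 2 * δ ^ 2
          gcongr
        rw [← ofReal_mul (by positivity), hGq w, mul_assoc, ← Real.exp_add]
        exact ofReal_le_ofReal (mul_le_of_le_one_right (by positivity)
          (exp_le_one_iff.2 (by linarith)))

end Weighted

theorem tsum_setLIntegral_le_mul_lintegral {X ι : Type*} [MeasurableSpace X] [Countable ι]
    {μ : Measure X} {s : ι → Set X} (hs : ∀ j, MeasurableSet (s j)) {N : ℕ}
    (hN : ∀ x, {j | x ∈ s j}.encard ≤ N) {f : X → ℝ≥0∞} (hf : Measurable f) :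
    ∑' j, ∫⁻ x in s j, f x ∂μ ≤ N * ∫⁻ x, f x ∂μ := by
  have hmult : ∀ x, ∑' j, (s j).indicator f x ≤ N * f x := fun x => by
    have : ∀ j, (s j).indicator f x = {j | x ∈ s j}.indicator (fun _ => f x) j := fun j => by
      by_cases hx : x ∈ s j <;> simp [hx]
    simp only [this, ← tsum_subtype, ENNReal.tsum_set_const]
    gcongr
    exact_mod_cast hN x
  calc ∑' j, ∫⁻ x in s j, f x ∂μ = ∫⁻ x, ∑' j, (s j).indicator f x ∂μ := by
        simp_rw [← lintegral_indicator (hs _)]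
        exact (lintegral_tsum fun j => (hf.indicator (hs j)).aemeasurable).symm
    _ ≤ ∫⁻ x, N * f x ∂μ := lintegral_mono hmult
    _ = N * ∫⁻ x, f x ∂μ := lintegral_const_mul _ hf

theorem eNormLpα_rpow {n : ℕ} {p : ℝ} (hp : p ≠ 0) (α : ℝ) (f : Cn n → ℂ) :
    eNormLpα n p α f ^ p =
      ∫⁻ z, ENNReal.ofReal (‖f z‖ ^ p * Real.exp (-(α * p / 2) * ‖z‖ ^ 2)) := by
  rw [eNormLpα, ← ENNReal.rpow_mul, one_div_mul_cancel hp, ENNReal.rpow_one]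

theorem lattice_sampling_general (n : ℕ) (α q δ : ℝ) (hα : 0 < α) (hq : 1 ≤ q)
    (hδ : 0 < δ) (N : ℕ) (zs : ℕ → Cn n)
    (hN : CoverMult n δ zs N) :
    ∃ C : ℝ, 0 < C ∧
      ∀ h : Cn n → ℂ, Differentiable ℂ h → eNormLpα n q α h < ∞ →
        ∑' j, ENNReal.ofReal (‖h (zs j)‖ ^ q * Real.exp (-(α * q / 2) * ‖zs j‖ ^ 2)) ≤
          ENNReal.ofReal C * eNormLpα n q α h ^ q := by
  obtain ⟨c, hc0, hctop, hc⟩ :=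
    exists_mul_norm_rpow_mul_exp_le_setLIntegral_ball (volume : Measure (Cn n)) hα.le hq hδ
  have hK : (N : ℝ≥0∞) / c ≠ ∞ := ENNReal.div_ne_top (natCast_ne_top N) hc0
  refine ⟨((N : ℝ≥0∞) / c).toReal + 1, by positivity, fun h hh _ => ?_⟩
  set f : Cn n → ℝ≥0∞ := fun w => ENNReal.ofReal (‖h w‖ ^ q * Real.exp (-(α * q / 2) * ‖w‖ ^ 2))
  have hf : Measurable f := Continuous.measurable (by
    have := hh.continuous.norm_rpow_const (zero_le_one.trans hq)
    fun_prop) |>.ennreal_ofReal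
  have hmult : ∀ w, {j | w ∈ ball (zs j) δ}.encard ≤ N := fun w => by
    rw [← (hN w).1.cast_ncard_eq]
    exact_mod_cast (hN w).2
  calc ∑' j, f (zs j) ≤ ∑' j, (∫⁻ w in ball (zs j) δ, f w) * c⁻¹ :=
        ENNReal.tsum_le_tsum fun j =>
          (ENNReal.le_div_iff_mul_le (Or.inl hc0) (Or.inl hctop)).2 (hc h hh (zs j))
    _ = (∑' j, ∫⁻ w in ball (zs j) δ, f w) * c⁻¹ := ENNReal.tsum_mul_right
    _ ≤ (N * ∫⁻ w, f w) * c⁻¹ := by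
        gcongr
        exact tsum_setLIntegral_le_mul_lintegral (fun _ => measurableSet_ball) hmult hf
    _ = (N : ℝ≥0∞) / c * eNormLpα n q α h ^ q := by
        rw [eNormLpα_rpow (zero_lt_one.trans_le hq).ne', div_eq_mul_inv]
        ring
    _ ≤ _ := by
        gcongr
        exact (ENNReal.le_ofReal_iff_toReal_le hK (by positivity)).2
          (le_add_of_nonneg_right zero_le_one)

/-- **Sampling inequality.** For `1 ≤ q < ∞` and a `δ`-lattice `{z_j}` with covering
multiplicity at most `N` at radius `δ`, there is `C > 0` such that for every `h ∈ F^q_α`,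
`∑_j |h(z_j)|^q e^{−αq|z_j|²/2} ≤ C ‖h‖_{q,α}^q`. -/
theorem lattice_sampling (n : ℕ) (hn : 1 ≤ n) (α q δ : ℝ) (hα : 0 < α) (hq : 1 ≤ q)
    (hδ : 0 < δ) (N : ℕ) (zs : ℕ → Cn n) (hlat : IsLattice n δ zs)
    (hN : CoverMult n δ zs N) :
    ∃ C : ℝ, 0 < C ∧
      ∀ h : Cn n → ℂ, Differentiable ℂ h → eNormLpα n q α h < ∞ →
        ∑' j, ENNReal.ofReal (‖h (zs j)‖ ^ q * Real.exp (-(α * q / 2) * ‖zs j‖ ^ 2)) ≤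
          ENNReal.ofReal C * eNormLpα n q α h ^ q :=
  lattice_sampling_general n α q δ hα hq hδ N zs hN
end

section
/- Let n ≥ 1, α > 0 and δ > 0, let μ be a positive Borel measure on ℂⁿ, and let {z_j} be a δ-lattice in ℂⁿ such that every point of ℂⁿ lies in at most N of the balls B(z_j, δ). Then there is a constant c > 0 (depending only on n, α, δ, N) such that for every m ∈ ℕ and all complex numbers c₁,…,c_m, ∫_{ℂⁿ} (∑_{j=1}^m |c_j|² |k_{z_j}(w)|²)^{1/2} e^{−α|w|²/2} dμ(w) ≥ c·∑_{j=1}^m |c_j|·μ(B(z_j, δ)). -/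
open MeasureTheory Metric ENNReal
open scoped ENNReal NNReal ComplexConjugate

/-
Near `z_j` the weighted kernel is bounded below:
`|k_{z_j}(w)| e^{−α|w|²/2} = e^{−α|w − z_j|²/2} ≥ e^{−αδ²/2}` on `B(z_j, δ)`. So at each point `w`,
the sum of `|c_j|` over the at most `N` balls containing `w` is controlled, via Cauchy–Schwarz,
by `√(N + 1)` times the square function at `w`. Integrating this pointwise bound against `μ`
turns `∑ |c_j| 1_{B(z_j,δ)}` into `∑ |c_j| μ(B(z_j,δ))`.
-/

open Finset

theorem MeasureTheory.sum_mul_measure_le_lintegral {X ι : Type*} [MeasurableSpace X]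
    (μ : Measure X) (t : Finset ι) {s : ι → Set X} (hs : ∀ i, MeasurableSet (s i))
    (a : ι → ℝ≥0∞) {F : X → ℝ≥0∞} (hF : ∀ x, ∑ i ∈ t, (s i).indicator (fun _ => a i) x ≤ F x) :
    ∑ i ∈ t, a i * μ (s i) ≤ ∫⁻ x, F x ∂μ :=
  calc ∑ i ∈ t, a i * μ (s i)
      = ∑ i ∈ t, ∫⁻ x, (s i).indicator (fun _ => a i) x ∂μ := by
        simp only [lintegral_indicator_const (hs _)]
    _ = ∫⁻ x, ∑ i ∈ t, (s i).indicator (fun _ => a i) x ∂μ :=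
        (lintegral_finsetSum t fun i _ => measurable_const.indicator (hs i)).symm
    _ ≤ ∫⁻ x, F x ∂μ := lintegral_mono hF

theorem Finset.sum_le_sqrt_mul_sqrt_sum_sq_of_card_le {ι : Type*} {s t : Finset ι} (hts : t ⊆ s)
    {N : ℕ} (ht : #t ≤ N) (f : ι → ℝ) :
    ∑ i ∈ t, f i ≤ √N * √(∑ i ∈ s, f i ^ 2) := by
  have hsq : (∑ i ∈ t, f i) ^ 2 ≤ N * ∑ i ∈ s, f i ^ 2 :=
    (sq_sum_le_card_mul_sum_sq).trans <| mul_le_mul (by exact_mod_cast ht)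
      (sum_le_sum_of_subset_of_nonneg hts fun i _ _ => sq_nonneg (f i))
      (sum_nonneg fun i _ => sq_nonneg (f i)) (Nat.cast_nonneg N)
  rw [← Real.sqrt_mul (Nat.cast_nonneg N)]
  exact Real.le_sqrt_of_sq_le hsq

theorem CoverMult.card_le {n : ℕ} {ρ : ℝ} {zs : ℕ → Cn n} {N : ℕ} (h : CoverMult n ρ zs N)
    {w : Cn n} {t : Finset ℕ} (ht : ∀ j ∈ t, w ∈ ball (zs j) ρ) : #t ≤ N :=
  calc #t ≤ #(h w).1.toFinset := card_le_card fun j hj => by simpa using ht j hj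
    _ = Set.ncard {j | w ∈ ball (zs j) ρ} := (Set.ncard_eq_toFinset_card _ (h w).1).symm
    _ ≤ N := (h w).2

theorem herm_eq_conj_inner {n : ℕ} (w z : Cn n) : herm w z = conj (inner ℂ w z) := by
  simp [herm, PiLp.inner_apply, RCLike.inner_apply, map_sum, mul_comm]

theorem norm_fockKernel_mul_exp (n : ℕ) (α : ℝ) (z w : Cn n) :
    ‖fockKernel n α z w‖ * Real.exp (-(α / 2) * ‖w‖ ^ 2) =
      Real.exp (-(α / 2) * ‖w - z‖ ^ 2) := by
  have hre : (inner ℂ z w).re = (inner ℂ w z).re := by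
    rw [← inner_conj_symm z w, Complex.conj_re]
  rw [fockKernel, Complex.norm_exp, ← Real.exp_add, @norm_sub_sq ℂ]
  simp [herm_eq_conj_inner, Complex.mul_re, hre, -Complex.ofReal_pow]
  ring

theorem exp_le_norm_fockKernel_mul_exp {n : ℕ} {α δ : ℝ} (hα : 0 ≤ α) {z w : Cn n}
    (hw : w ∈ ball z δ) :
    Real.exp (-(α / 2) * δ ^ 2) ≤ ‖fockKernel n α z w‖ * Real.exp (-(α / 2) * ‖w‖ ^ 2) := by
  rw [norm_fockKernel_mul_exp, Real.exp_le_exp, ← dist_eq_norm]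
  have := pow_le_pow_left₀ dist_nonneg (mem_ball.mp hw).le 2
  nlinarith

theorem sum_indicator_le_sqrt_sum_sq_norm_fockKernel_mul_exp {n : ℕ} {α δ : ℝ} (hα : 0 ≤ α)
    {N : ℕ} {zs : ℕ → Cn n} (hN : CoverMult n δ zs N) {m : ℕ} (cs : Fin m → ℂ) (w : Cn n) :
    ∑ j : Fin m, (ball (zs j) δ).indicator
        (fun _ => Real.exp (-(α / 2) * δ ^ 2) / √(N + 1) * ‖cs j‖) w ≤
      √(∑ j : Fin m, ‖cs j‖ ^ 2 * ‖fockKernel n α (zs j) w‖ ^ 2) *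
        Real.exp (-(α / 2) * ‖w‖ ^ 2) := by
  classical
  set E := Real.exp (-(α / 2) * ‖w‖ ^ 2)
  set T : Finset (Fin m) := {j | w ∈ ball (zs j) δ}
  have hT : #T ≤ N + 1 := by
    rw [← card_map Fin.valEmbedding]
    refine (hN.card_le (w := w) fun j hj => ?_).trans N.le_succ
    obtain ⟨i, hi, rfl⟩ := mem_map.mp hj
    exact (mem_filter.mp hi).2
  simp_rw [sum_indicator_eq_sum_filter, div_mul_eq_mul_div, ← sum_div]
  rw [div_le_iff₀ (by positivity)]
  calc ∑ j ∈ T, Real.exp (-(α / 2) * δ ^ 2) * ‖cs j‖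
      ≤ ∑ j ∈ T, ‖cs j‖ * ‖fockKernel n α (zs j) w‖ * E :=
        sum_le_sum fun j hj => by
          rw [mul_comm, mul_assoc]
          exact mul_le_mul_of_nonneg_left
            (exp_le_norm_fockKernel_mul_exp hα (mem_filter.mp hj).2) (norm_nonneg _)
    _ ≤ √(N + 1 : ℕ) * √(∑ j, (‖cs j‖ * ‖fockKernel n α (zs j) w‖ * E) ^ 2) :=
        sum_le_sqrt_mul_sqrt_sum_sq_of_card_le (subset_univ T) hT _
    _ = √(∑ j, ‖cs j‖ ^ 2 * ‖fockKernel n α (zs j) w‖ ^ 2) * E * √(N + 1) := by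
        simp_rw [mul_pow, ← sum_mul]
        rw [Real.sqrt_mul' _ (sq_nonneg E), Real.sqrt_sq (Real.exp_nonneg _)]
        push_cast
        ring

theorem kernel_sqsum_lower_bound_general (n : ℕ) (α δ : ℝ) (hα : 0 < α)
    (N : ℕ) (zs : ℕ → Cn n) (hN : CoverMult n δ zs N) :
    ∃ c : ℝ, 0 < c ∧
      ∀ (μ : Measure (Cn n)) (m : ℕ) (cs : Fin m → ℂ),
        ENNReal.ofReal c *
            ∑ j : Fin m, ENNReal.ofReal ‖cs j‖ * μ (ball (zs j.val) δ) ≤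
          ∫⁻ w, ENNReal.ofReal
            (Real.sqrt (∑ j : Fin m, ‖cs j‖ ^ 2 * ‖fockKernel n α (zs j.val) w‖ ^ 2) *
              Real.exp (-(α / 2) * ‖w‖ ^ 2)) ∂μ := by
  -- `N + 1` rather than `N`, so that `c > 0` also when `N = 0`
  set c := Real.exp (-(α / 2) * δ ^ 2) / √(N + 1)
  refine ⟨c, by positivity, fun μ m cs => ?_⟩
  rw [mul_sum]
  simp_rw [← mul_assoc, ← ENNReal.ofReal_mul (by positivity : 0 ≤ c)]
  refine sum_mul_measure_le_lintegral μ univ (fun _ => measurableSet_ball) _ fun w => ?_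
  have hind (j : Fin m) : (ball (zs j) δ).indicator (fun _ => ENNReal.ofReal (c * ‖cs j‖)) w =
      ENNReal.ofReal ((ball (zs j) δ).indicator (fun _ => c * ‖cs j‖) w) := by
    by_cases hj : w ∈ ball (zs j) δ <;> simp [hj]
  simp_rw [hind]
  rw [← ENNReal.ofReal_sum_of_nonneg fun j _ => Set.indicator_nonneg (fun _ _ => by positivity) _]
  exact ENNReal.ofReal_le_ofReal
    (sum_indicator_le_sqrt_sum_sq_norm_fockKernel_mul_exp hα.le hN cs w)

/-- **Key estimate in Proposition 2.4.** For a `δ`-lattice `{z_j}` with covering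
multiplicity at most `N` at radius `δ`, there is `c > 0` such that for every positive
Borel measure `μ`, every `m` and all `c₁,…,c_m ∈ ℂ`,
`∫ (∑_{j≤m} |c_j|²|k_{z_j}(w)|²)^{1/2} e^{−α|w|²/2} dμ(w) ≥ c ∑_{j≤m} |c_j| μ(B(z_j,δ))`. -/
theorem kernel_sqsum_lower_bound (n : ℕ) (hn : 1 ≤ n) (α δ : ℝ) (hα : 0 < α) (hδ : 0 < δ)
    (N : ℕ) (zs : ℕ → Cn n) (hlat : IsLattice n δ zs) (hN : CoverMult n δ zs N) :
    ∃ c : ℝ, 0 < c ∧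
      ∀ (μ : Measure (Cn n)) (m : ℕ) (cs : Fin m → ℂ),
        ENNReal.ofReal c *
            ∑ j : Fin m, ENNReal.ofReal ‖cs j‖ * μ (ball (zs j.val) δ) ≤
          ∫⁻ w, ENNReal.ofReal
            (Real.sqrt (∑ j : Fin m, ‖cs j‖ ^ 2 * ‖fockKernel n α (zs j.val) w‖ ^ 2) *
              Real.exp (-(α / 2) * ‖w‖ ^ 2)) ∂μ :=
  kernel_sqsum_lower_bound_general n α δ hα N zs hN
end
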